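/- arXiv:2406.05095 — 7 statements merged into one kernel-verified Lean document; each statement's English description precedes it below -/
import Mathlib

section
/- Let G be a loopless multigraph and F : V(G) → finite sets of naturals with |F(v)| < d(v)/2 for all v. If G has no F-avoiding orientation and |E(G)| is minimum among all such counterexamples, then no two vertices of even degree in G are adjacent. -/
attribute [local instance] Classical.propDecidable

/-- A loopless multigraph: edges indexed by `E` with endpoints in `Sym2 V`. -/
structure Multigraph (V E : Type) where
  ends : E → Sym2 V
  loopless : ∀ e, ¬ (ends e).IsDiag

namespace Multigraph

variable {V E : Type}

/-- Degree of a vertex: number of edges incident to it. -/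
noncomputable def deg [Fintype E] (G : Multigraph V E) (v : V) : ℕ :=
  (Finset.univ.filter fun e => v ∈ G.ends e).card

/-- Two vertices are adjacent if some edge joins them. -/
def Adj (G : Multigraph V E) (u v : V) : Prop :=
  u ≠ v ∧ ∃ e, G.ends e = s(u, v)

/-- An orientation assigns a tail and head to each edge, consistent with its endpoints. -/
structure Orientation (G : Multigraph V E) where
  tail : E → V
  head : E → V
  consistent : ∀ e, G.ends e = s(tail e, head e)

/-- Out-degree of a vertex in an orientation. -/
noncomputable def Orientation.outDeg [Fintype E] {G : Multigraph V E} (D : G.Orientation)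
    (v : V) : ℕ :=
  (Finset.univ.filter fun e => D.tail e = v).card

/-- An orientation is `F`-avoiding if no vertex has out-degree in its forbidden list. -/
def Orientation.Avoids [Fintype E] {G : Multigraph V E} (D : G.Orientation)
    (F : V → Finset ℕ) : Prop :=
  ∀ v, D.outDeg v ∉ F v

/-- Number of edges with both endpoints in `S`. -/
noncomputable def eIn [Fintype E] (G : Multigraph V E) (S : Finset V) : ℕ :=
  (Finset.univ.filter fun e => ∀ w ∈ G.ends e, w ∈ S).card

/-- Number of edges with exactly one endpoint in `S`. -/
noncomputable def cut [Fintype E] (G : Multigraph V E) (S : Finset V) : ℕ :=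
  (Finset.univ.filter fun e => (∃ w ∈ G.ends e, w ∈ S) ∧ ¬ ∀ w ∈ G.ends e, w ∈ S).card

/-- Reachability by directed paths in an orientation. -/
def Orientation.Reach {G : Multigraph V E} (D : G.Orientation) : V → V → Prop :=
  Relation.ReflTransGen fun a b => ∃ e, D.tail e = a ∧ D.head e = b

end Multigraph

/-!
Let `e₀` join `u` and `v`, both of even degree. Delete `e₀` and lower every forbidden value at
`u` by one. Since `2 |F w| < d(w)` with `d(w)` even gives `2 |F w| + 1 < d(w)`, the smaller
instance still satisfies the degree condition, so by minimality it has an avoiding orientation.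
Orienting `e₀` from `u` to `v` raises the out-degree of `u` by one and changes no other, which
yields an `F`-avoiding orientation of `G`.
-/

open Finset

theorem Finset.card_filter_subtype_ne {E : Type} [Fintype E] [DecidableEq E] (e₀ : E)
    (p : E → Prop) [DecidablePred p] :
    (univ.filter fun e : {e // e ≠ e₀} => p e).card = ((univ.filter p).erase e₀).card := by
  rw [← filter_ne', ← card_subtype (· ≠ e₀) (univ.filter p)]
  exact congrArg card (by ext; simp)

noncomputable def lowerAt {V : Type} (F : V → Finset ℕ) (u : V) : V → Finset ℕ :=
  Function.update F u ((F u).image (· - 1))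

theorem card_lowerAt_le {V : Type} (F : V → Finset ℕ) (u w : V) :
    (lowerAt F u w).card ≤ (F w).card := by
  by_cases hw : w = u
  · subst hw
    simpa [lowerAt] using card_image_le
  · simp [lowerAt, hw]

namespace Multigraph

variable {V E : Type} [Fintype E]

@[simps]
def deleteEdge (G : Multigraph V E) (e₀ : E) : Multigraph V {e // e ≠ e₀} :=
  ⟨fun e => G.ends e, fun e => G.loopless e⟩

theorem deg_deleteEdge (G : Multigraph V E) (e₀ : E) (w : V) :
    (G.deleteEdge e₀).deg w = ((univ.filter fun e => w ∈ G.ends e).erase e₀).card :=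
  card_filter_subtype_ne e₀ (w ∈ G.ends ·)

theorem deg_deleteEdge_add_one {G : Multigraph V E} {e₀ : E} {w : V} (hw : w ∈ G.ends e₀) :
    (G.deleteEdge e₀).deg w + 1 = G.deg w := by
  rw [deg_deleteEdge, card_erase_add_one (by simpa using hw), deg]

theorem deg_deleteEdge_of_notMem {G : Multigraph V E} {e₀ : E} {w : V} (hw : w ∉ G.ends e₀) :
    (G.deleteEdge e₀).deg w = G.deg w := by
  rw [deg_deleteEdge, erase_eq_of_notMem (by simpa using hw), deg]

theorem two_mul_card_lowerAt_lt_deg_deleteEdge {G : Multigraph V E} {F : V → Finset ℕ}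
    (hF : ∀ w, 2 * (F w).card < G.deg w) {e₀ : E} (heven : ∀ w ∈ G.ends e₀, Even (G.deg w))
    (u w : V) : 2 * (lowerAt F u w).card < (G.deleteEdge e₀).deg w := by
  have hle := card_lowerAt_le F u w
  have hlt := hF w
  by_cases hw : w ∈ G.ends e₀
  · have hdeg := deg_deleteEdge_add_one hw
    obtain ⟨k, hk⟩ := heven w hw
    omega
  · rw [deg_deleteEdge_of_notMem hw]
    omega

noncomputable def Orientation.extend {G : Multigraph V E} {e₀ : E}
    (D' : (G.deleteEdge e₀).Orientation) {a b : V} (h : G.ends e₀ = s(a, b)) :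
    G.Orientation where
  tail e := if he : e = e₀ then a else D'.tail ⟨e, he⟩
  head e := if he : e = e₀ then b else D'.head ⟨e, he⟩
  consistent e := by
    by_cases he : e = e₀
    · subst he
      simpa using h
    · simpa [he] using D'.consistent ⟨e, he⟩

namespace Orientation

variable {G : Multigraph V E} {e₀ : E} (D' : (G.deleteEdge e₀).Orientation) {a b : V}
  (h : G.ends e₀ = s(a, b))

theorem outDeg_eq_card_erase (w : V) :
    D'.outDeg w = ((univ.filter fun e => (D'.extend h).tail e = w).erase e₀).card := by
  rw [← card_filter_subtype_ne]
  exact congrArg card (by ext e; simp [extend, e.2])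

theorem outDeg_extend_self : (D'.extend h).outDeg a = D'.outDeg a + 1 := by
  rw [outDeg_eq_card_erase D' h, card_erase_add_one (by simp [extend]), outDeg]

theorem outDeg_extend_of_ne {w : V} (hw : w ≠ a) : (D'.extend h).outDeg w = D'.outDeg w := by
  rw [outDeg_eq_card_erase D' h, erase_eq_of_notMem (by simp [extend, Ne.symm hw]), outDeg]

variable {D' h} in
theorem Avoids.extend {F : V → Finset ℕ} (hD' : D'.Avoids (lowerAt F a)) :
    (D'.extend h).Avoids F := by
  intro w hw
  by_cases hwa : w = a
  · subst hwa
    rw [outDeg_extend_self] at hw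
    exact hD' w (by simpa [lowerAt] using ⟨_, hw, rfl⟩)
  · rw [outDeg_extend_of_ne D' h hwa] at hw
    exact hD' w (by simpa [lowerAt, hwa] using hw)

end Orientation

end Multigraph

theorem stmt0 {V E : Type} [Fintype E] (G : Multigraph V E) (F : V → Finset ℕ)
    (hF : ∀ v, 2 * (F v).card < G.deg v)
    (hno : ¬ ∃ D : G.Orientation, D.Avoids F)
    (hmin : ∀ (V' E' : Type) [Fintype E'] (G' : Multigraph V' E') (F' : V' → Finset ℕ),
      Fintype.card E' < Fintype.card E → (∀ v, 2 * (F' v).card < G'.deg v) →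
      ∃ D : G'.Orientation, D.Avoids F') :
    ∀ u v : V, Even (G.deg u) → Even (G.deg v) → ¬ G.Adj u v := by
  rintro u v hu hv ⟨-, e₀, he₀⟩
  have heven : ∀ w ∈ G.ends e₀, Even (G.deg w) := by
    intro w hw
    rcases Sym2.mem_iff.mp (he₀ ▸ hw) with rfl | rfl <;> assumption
  obtain ⟨D', hD'⟩ := hmin V _ (G.deleteEdge e₀) (lowerAt F u)
    (Fintype.card_subtype_lt (x := e₀) (by simp))
    (G.two_mul_card_lowerAt_lt_deg_deleteEdge hF heven u)
  exact hno ⟨D'.extend he₀, hD'.extend⟩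
end

section
/- Let G be a 2-degenerate loopless multigraph and F : V(G) → finite sets of naturals with |F(v)| < d_G(v)/2 for all v ∈ V(G). Then G admits an F-avoiding orientation. -/
attribute [local instance] Classical.propDecidable

/-!
Peel off the edges one at a time. In a `k`-degenerate graph some vertex `v` meets at most `k`
of the remaining edges, so the invariant `k * #F(v) < d(v)` (or `F(v) = ∅`), with `d` the degree
in the remaining graph, forces `F(v) = ∅`: the orientation of an edge `vu` never matters at `v`.
Deleting `vu`, replace `F(u)` by `{j ∈ F(u) | j + 1 ∈ F(u)}`, which is smaller by at least one,
so the invariant survives. If the out-degree `c` of `u` in the smaller graph avoids this set,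
then `c ∉ F(u)` or `c + 1 ∉ F(u)`, and orienting `vu` towards `u` or away from it respectively
avoids `F(u)`.
-/

open Finset

theorem Sym2.exists_mem {α : Type*} (z : Sym2 α) : ∃ a, a ∈ z :=
  z.ind fun x y => ⟨x, Sym2.mem_mk_left x y⟩

theorem Finset.card_filter_succ_mem_lt {S : Finset ℕ} (hS : S.Nonempty) :
    #{j ∈ S | j + 1 ∈ S} < #S := by
  refine card_lt_card ⟨filter_subset _ _, fun hsub => ?_⟩
  have hmax := hsub (S.max'_mem hS)
  rw [mem_filter] at hmax
  exact absurd (S.le_max' _ hmax.2) (by omega)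

theorem Finset.card_filter_eq_card_filter_erase_add {α : Type*} {A : Finset α} {a : α}
    (ha : a ∈ A) (p : α → Prop) [DecidablePred p] :
    #{x ∈ A | p x} = #{x ∈ A.erase a | p x} + if p a then 1 else 0 := by
  rw [filter_erase]
  split_ifs with hp
  · exact (card_erase_add_one (mem_filter.2 ⟨ha, hp⟩)).symm
  · rw [erase_eq_of_notMem (fun h => hp (mem_filter.1 h).2), add_zero]

namespace Multigraph

variable {V E : Type} (G : Multigraph V E)

def IsDegenerate [Fintype E] (k : ℕ) : Prop :=
  ∀ S : Finset V, S.Nonempty → ∃ v ∈ S,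
    #{e | v ∈ G.ends e ∧ ∀ w ∈ G.ends e, w ∈ S} ≤ k

noncomputable def degOn (A : Finset E) (v : V) : ℕ :=
  #{e ∈ A | v ∈ G.ends e}

def FewForbidden (k : ℕ) (A : Finset E) (F : V → Finset ℕ) : Prop :=
  ∀ v, F v = ∅ ∨ k * #(F v) < G.degOn A v

def AvoidsOn (tail : E → V) (A : Finset E) (F : V → Finset ℕ) : Prop :=
  ∀ v, #{e ∈ A | tail e = v} ∉ F v

theorem degOn_eq_degOn_erase_add {A : Finset E} {e : E} (he : e ∈ A) (v : V) :
    G.degOn A v = G.degOn (A.erase e) v + if v ∈ G.ends e then 1 else 0 :=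
  card_filter_eq_card_filter_erase_add he _

variable {G}

theorem IsDegenerate.exists_degOn_le [Fintype E] {k : ℕ} (hG : G.IsDegenerate k)
    {A : Finset E} (hA : A.Nonempty) : ∃ e ∈ A, ∃ v ∈ G.ends e, G.degOn A v ≤ k := by
  obtain ⟨v, hvS, hv⟩ := hG (A.biUnion fun e => (G.ends e).toFinset) (by
    obtain ⟨e, he⟩ := hA
    obtain ⟨x, hx⟩ := (G.ends e).exists_mem
    exact ⟨x, mem_biUnion.2 ⟨e, he, Sym2.mem_toFinset.2 hx⟩⟩)
  obtain ⟨e, he, hve⟩ := mem_biUnion.1 hvS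
  refine ⟨e, he, v, Sym2.mem_toFinset.1 hve, le_trans (card_le_card fun e' he' => ?_) hv⟩
  rw [mem_filter] at he' ⊢
  exact ⟨mem_univ _, he'.2, fun w hw => mem_biUnion.2 ⟨e', he'.1, Sym2.mem_toFinset.2 hw⟩⟩

theorem FewForbidden.eq_empty {k : ℕ} {A : Finset E} {F : V → Finset ℕ}
    (hF : G.FewForbidden k A F) {v : V} (hv : G.degOn A v ≤ k) : F v = ∅ := by
  rcases hF v with h | h
  · exact h
  · rw [← card_eq_zero]
    by_contra hne
    have := Nat.le_mul_of_pos_right k (Nat.pos_of_ne_zero hne)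
    omega

theorem FewForbidden.erase {k : ℕ} (hk : 0 < k) {A : Finset E} {F : V → Finset ℕ}
    (hF : G.FewForbidden k A F) {e : E} (he : e ∈ A) {u v : V} (hends : G.ends e = s(v, u))
    (hFv : F v = ∅) :
    G.FewForbidden k (A.erase e) (Function.update F u {j ∈ F u | j + 1 ∈ F u}) := by
  intro w
  rcases (F w).eq_empty_or_nonempty with hempty | hne
  · left
    rcases eq_or_ne w u with rfl | hwu
    · simp [hempty]
    · rwa [Function.update_of_ne hwu]
  right
  have hw := (hF w).resolve_left hne.ne_empty
  rw [G.degOn_eq_degOn_erase_add he] at hw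
  rcases eq_or_ne w u with rfl | hwu
  · rw [if_pos (hends ▸ Sym2.mem_mk_right v w)] at hw
    rw [Function.update_self]
    have hshrink := Nat.mul_le_mul_left k (card_filter_succ_mem_lt hne)
    rw [Nat.mul_succ] at hshrink
    omega
  · have hwv : w ≠ v := by
      rintro rfl
      exact hne.ne_empty hFv
    rw [Function.update_of_ne hwu]
    rwa [if_neg (by rw [hends, Sym2.mem_iff]; exact fun h => h.elim hwv hwu), add_zero] at hw

theorem AvoidsOn.update {A : Finset E} {F : V → Finset ℕ} {e : E} (he : e ∈ A) {u v : V}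
    (huv : u ≠ v) (hFv : F v = ∅) {tail : E → V}
    (havoid : AvoidsOn tail (A.erase e) (Function.update F u {j ∈ F u | j + 1 ∈ F u})) :
    AvoidsOn (Function.update tail e
      (if #{e' ∈ A.erase e | tail e' = u} ∈ F u then u else v)) A F := by
  intro w
  rw [card_filter_eq_card_filter_erase_add he, Function.update_self,
    filter_congr fun e' he' => by rw [Function.update_of_ne (ne_of_mem_erase he')]]
  have hw := havoid w
  rcases eq_or_ne w v with rfl | hwv
  · simp [hFv]
  rcases eq_or_ne w u with rfl | hwu
  · rw [Function.update_self, mem_filter] at hw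
    by_cases hc : #{e' ∈ A.erase e | tail e' = w} ∈ F w
    · rw [if_pos hc, if_pos rfl]
      exact fun h => hw ⟨hc, h⟩
    · rwa [if_neg hc, if_neg hwv.symm, add_zero]
  · rw [Function.update_of_ne hwu] at hw
    rw [if_neg (by split_ifs; exacts [hwu.symm, hwv.symm]), add_zero]
    exact hw

theorem exists_tail_avoiding [Fintype E] {k : ℕ} (hG : G.IsDegenerate k) (hk : 0 < k)
    (A : Finset E) {F : V → Finset ℕ} (hF : G.FewForbidden k A F) :
    ∃ tail : E → V, (∀ e, tail e ∈ G.ends e) ∧ AvoidsOn tail A F := by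
  induction A using Finset.strongInduction generalizing F with
  | H A ih =>
  rcases A.eq_empty_or_nonempty with rfl | hA
  · choose tail htail using fun e => (G.ends e).exists_mem
    refine ⟨tail, htail, fun v => ?_⟩
    rw [hF.eq_empty (by simp [degOn])]
    exact notMem_empty _
  obtain ⟨e, he, v, hve, hdeg⟩ := hG.exists_degOn_le hA
  have hFv := hF.eq_empty hdeg
  obtain ⟨u, hends⟩ : ∃ u, G.ends e = s(v, u) := ⟨_, (Sym2.other_spec hve).symm⟩
  have huv : u ≠ v := fun h => G.loopless e (by rw [hends, h, Sym2.mk_isDiag_iff])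
  obtain ⟨tail, htail, havoid⟩ :=
    ih (A.erase e) (erase_ssubset he) (hF.erase hk he hends hFv)
  refine ⟨_, fun e' => ?_, havoid.update he huv hFv⟩
  rcases eq_or_ne e' e with rfl | he'
  · rw [Function.update_self, hends]
    split_ifs
    exacts [Sym2.mem_mk_right _ _, Sym2.mem_mk_left _ _]
  · rw [Function.update_of_ne he']
    exact htail e'

noncomputable def Orientation.ofTail (tail : E → V) (htail : ∀ e, tail e ∈ G.ends e) :
    G.Orientation where
  tail := tail
  head e := Sym2.Mem.other (htail e)
  consistent e := (Sym2.other_spec (htail e)).symm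

theorem exists_avoiding_orientation [Fintype E] {k : ℕ} (hG : G.IsDegenerate k) (hk : 0 < k)
    {F : V → Finset ℕ} (hF : ∀ v, k * #(F v) < G.deg v) :
    ∃ D : G.Orientation, D.Avoids F := by
  obtain ⟨tail, htail, havoid⟩ := exists_tail_avoiding hG hk univ fun v => Or.inr (hF v)
  exact ⟨Orientation.ofTail tail htail, havoid⟩

end Multigraph

/-- 2-degenerate multigraphs. -/
theorem stmt4 {V E : Type} [Fintype E] (G : Multigraph V E)
    (hdegen : ∀ S : Finset V, S.Nonempty → ∃ v ∈ S,
      (Finset.univ.filter fun e => v ∈ G.ends e ∧ ∀ w ∈ G.ends e, w ∈ S).card ≤ 2)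
    (F : V → Finset ℕ) (hF : ∀ v, 2 * (F v).card < G.deg v) :
    ∃ D : G.Orientation, D.Avoids F :=
  Multigraph.exists_avoiding_orientation hdegen two_pos hF
end

section
/- Every forest G with F : V(G) → finite sets of naturals satisfying |F(v)| < d_G(v)/2 for all v admits an F-avoiding orientation. -/
attribute [local instance] Classical.propDecidable

lemma subcard {E : Type} [Fintype E] (e : E) (Q : E → Prop) [DecidablePred Q]
    [DecidablePred fun x : {y : E // y ≠ e} => Q x.1] :
    (Finset.univ.filter fun x : {y : E // y ≠ e} => Q x.1).card
      = (Finset.univ.filter fun x : E => x ≠ e ∧ Q x).card := by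
  classical
  rw [← Fintype.card_subtype, ← Fintype.card_subtype]
  exact Fintype.card_congr ⟨fun a => ⟨a.1.1, a.1.2, a.2⟩, fun b => ⟨⟨b.1, b.2.1⟩, b.2.2⟩,
    fun a => rfl, fun b => rfl⟩

lemma splitcard {E : Type} [Fintype E] (e : E) (Q : E → Prop) [DecidablePred Q] :
    (Finset.univ.filter Q).card
      = (Finset.univ.filter fun x : E => x ≠ e ∧ Q x).card + if Q e then 1 else 0 := by
  classical
  have h : (Finset.univ.filter fun x : E => x ≠ e ∧ Q x) = (Finset.univ.filter Q).erase e := by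
    ext x
    simp [Finset.mem_erase, and_comm]
  rw [h]
  by_cases hQ : Q e
  · rw [if_pos hQ, Finset.card_erase_of_mem (by simp [hQ])]
    have : 0 < (Finset.univ.filter Q).card := Finset.card_pos.2 ⟨e, by simp [hQ]⟩
    omega
  · rw [if_neg hQ, Finset.erase_eq_of_notMem (by simp [hQ])]
    simp

open Multigraph in
lemma main_aux : ∀ (n : ℕ) (V E : Type) [Fintype E] (G : Multigraph V E),
    Fintype.card E = n →
    (∀ T : Finset E, T.Nonempty →
      ∃ v : V, (T.filter fun e => v ∈ G.ends e).card = 1) →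
    ∀ F : V → Finset ℕ, (∀ v, (F v).Nonempty → 2 * (F v).card < G.deg v) →
    ∃ D : G.Orientation, D.Avoids F := by
  intro n
  induction n using Nat.strong_induction_on with
  | _ n ih =>
    intro V E _ G hcard hforest F hF
    by_cases hE : Nonempty E
    case neg =>
      have hempty : IsEmpty E := not_nonempty_iff.mp hE
      refine ⟨⟨fun e => isEmptyElim e, fun e => isEmptyElim e, fun e => isEmptyElim e⟩, ?_⟩
      intro v hv
      have h0 : (⟨fun e => isEmptyElim e, fun e => isEmptyElim e,
          fun e => isEmptyElim e⟩ : G.Orientation).outDeg v = 0 := by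
        simp [Orientation.outDeg, Finset.filter_eq_empty_iff]
      rw [h0] at hv
      have hdv : G.deg v = 0 := by
        simp [Multigraph.deg, Finset.filter_eq_empty_iff]
      have := hF v ⟨0, hv⟩
      omega
    case pos =>
      obtain ⟨v, hv1⟩ := hforest Finset.univ Finset.univ_nonempty
      obtain ⟨e, he⟩ := Finset.card_eq_one.mp hv1
      have hve : v ∈ G.ends e := by
        have : e ∈ Finset.univ.filter fun e => v ∈ G.ends e := he ▸ Finset.mem_singleton_self e
        exact (Finset.mem_filter.mp this).2
      have hdegv : G.deg v = 1 := by rw [Multigraph.deg, he]; simp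
      have hFv : F v = ∅ := by
        by_contra hne
        have h1 := hF v (Finset.nonempty_iff_ne_empty.mpr hne)
        have h2 : 0 < (F v).card := Finset.card_pos.mpr (Finset.nonempty_iff_ne_empty.mpr hne)
        omega
      set u := Sym2.Mem.other hve with hu
      have hvu : s(v, u) = G.ends e := Sym2.other_spec hve
      have hune : u ≠ v := by
        intro h
        apply G.loopless e
        rw [← hvu, h]
        exact Sym2.mk_isDiag_iff.mpr rfl
      have hue : u ∈ G.ends e := by rw [← hvu]; simp
      -- the smaller graph
      set E' := {y : E // y ≠ e} with hE'
      let G' : Multigraph V E' := ⟨fun x => G.ends x.1, fun x => G.loopless x.1⟩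
      have hcard' : Fintype.card E' < n := by
        rw [← hcard]
        exact Fintype.card_subtype_lt (x := e) (by simp)
      have hdeg : ∀ w : V, G.deg w = G'.deg w + if w ∈ G.ends e then 1 else 0 := by
        intro w
        have h1 : G.deg w = (Finset.univ.filter fun x : E => x ≠ e ∧ w ∈ G.ends x).card
            + if w ∈ G.ends e then 1 else 0 := splitcard e _
        have h2 : G'.deg w = (Finset.univ.filter fun x : E => x ≠ e ∧ w ∈ G.ends x).card :=
          subcard e (fun x => w ∈ G.ends x)
        rw [h1, h2]
      set F' : V → Finset ℕ := fun w =>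
        if w = u then (F u).filter (fun k => k + 1 ∈ F u) else F w with hF'def
      have hforest' : ∀ T : Finset E', T.Nonempty →
          ∃ w : V, (T.filter fun x => w ∈ G'.ends x).card = 1 := by
        intro T hT
        obtain ⟨x, hx⟩ := hT
        obtain ⟨w, hw⟩ := hforest (T.image Subtype.val) ⟨x.1, Finset.mem_image_of_mem _ hx⟩
        refine ⟨w, ?_⟩
        have hclaim : ((T.image Subtype.val).filter fun e' => w ∈ G.ends e')
            = (T.filter fun x : E' => w ∈ G.ends x.1).image Subtype.val := by
          ext y
          simp only [Finset.mem_filter, Finset.mem_image]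
          constructor
          · rintro ⟨⟨z, hz, rfl⟩, h2⟩
            exact ⟨z, ⟨hz, h2⟩, rfl⟩
          · rintro ⟨z, ⟨hz, h2⟩, rfl⟩
            exact ⟨⟨z, hz, rfl⟩, h2⟩
        rw [hclaim, Finset.card_image_of_injective _ Subtype.val_injective] at hw
        exact hw
      have hF'cond : ∀ w, (F' w).Nonempty → 2 * (F' w).card < G'.deg w := by
        intro w hw
        by_cases hwu : w = u
        · rw [hwu] at hw ⊢
          have hsub : F' u ⊆ F u := by
            rw [hF'def]
            simp only [if_pos rfl]
            exact Finset.filter_subset _ _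
          have hne : (F u).Nonempty := hw.mono hsub
          have h1 := hF u hne
          have hmax : (F u).max' hne ∉ F' u := by
            rw [hF'def]
            simp only [eq_self_iff_true, if_true, Finset.mem_filter, not_and]
            intro _ hmem
            have := Finset.le_max' _ _ hmem
            omega
          have hlt : (F' u).card < (F u).card :=
            Finset.card_lt_card ⟨hsub, fun hall => hmax (hall ((F u).max'_mem hne))⟩
          have hdw := hdeg u
          rw [if_pos hue] at hdw
          omega
        · have hFw : F' w = F w := by rw [hF'def]; simp [hwu]
          rw [hFw] at hw ⊢
          have h1 := hF w hw
          have hdw := hdeg w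
          by_cases hwv : w = v
          · subst hwv
            rw [hdegv] at h1
            have : 0 < (F w).card := Finset.card_pos.mpr hw
            omega
          · have hwne : w ∉ G.ends e := by
              rw [← hvu]
              simp only [Sym2.mem_iff]
              push_neg
              exact ⟨hwv, fun h => hwu h⟩
            rw [if_neg hwne] at hdw
            omega
      obtain ⟨D', hD'⟩ := ih _ hcard' V E' G' rfl hforest' F' hF'cond
      -- choose orientation of e
      set t0 : V := if D'.outDeg u + 1 ∈ F u then v else u with ht0
      set h0 : V := if D'.outDeg u + 1 ∈ F u then u else v with hh0
      have hcons : G.ends e = s(t0, h0) := by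
        rw [← hvu, ht0, hh0]
        by_cases hmem : D'.outDeg u + 1 ∈ F u <;> simp [hmem, Sym2.eq_swap]
      let tl : E → V := fun x => if h : x = e then t0 else D'.tail ⟨x, h⟩
      let hd : E → V := fun x => if h : x = e then h0 else D'.head ⟨x, h⟩
      have hcons' : ∀ x, G.ends x = s(tl x, hd x) := by
        intro x
        by_cases h : x = e
        · subst h; simpa [tl, hd] using hcons
        · simpa [tl, hd, dif_neg h] using D'.consistent ⟨x, h⟩
      let D : G.Orientation := ⟨tl, hd, hcons'⟩
      have htail : ∀ x : E', tl x.1 = D'.tail x := by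
        intro x
        show (if h : x.1 = e then t0 else D'.tail ⟨x.1, h⟩) = _
        rw [dif_neg x.2]
      have htaile : tl e = t0 := dif_pos rfl
      have houtdeg : ∀ w : V, D.outDeg w = D'.outDeg w + if t0 = w then 1 else 0 := by
        intro w
        have h1 : D.outDeg w = (Finset.univ.filter fun x : E => x ≠ e ∧ tl x = w).card
            + if tl e = w then 1 else 0 := splitcard e _
        have h2 : (Finset.univ.filter fun x : E' => tl x.1 = w).card
            = (Finset.univ.filter fun x : E => x ≠ e ∧ tl x = w).card := subcard e (fun x => tl x = w)
        have h3 : (Finset.univ.filter fun x : E' => tl x.1 = w)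
            = (Finset.univ.filter fun x : E' => D'.tail x = w) := by
          apply Finset.filter_congr
          intro x _
          rw [htail x]
        have h4 : D'.outDeg w = (Finset.univ.filter fun x : E' => D'.tail x = w).card := rfl
        rw [h1, ← h2, h3, htaile, h4]
      refine ⟨D, ?_⟩
      intro w
      by_cases hwu : w = u
      · rw [hwu]
        have hD'w := hD' u
        rw [hF'def] at hD'w
        simp only [if_pos rfl] at hD'w
        rw [houtdeg u]
        by_cases hmem : D'.outDeg u + 1 ∈ F u
        · have ht : t0 = v := by rw [ht0, if_pos hmem]
          rw [ht, if_neg (fun h => hune h.symm), Nat.add_zero]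
          intro hmem2
          exact hD'w (Finset.mem_filter.mpr ⟨hmem2, hmem⟩)
        · have ht : t0 = u := by rw [ht0, if_neg hmem]
          rw [ht, if_pos rfl]
          exact hmem
      · rw [houtdeg w]
        by_cases hwv : w = v
        · subst hwv
          rw [hFv]
          exact Finset.notMem_empty _
        · have ht0ne : t0 ≠ w := by
            rw [ht0]
            by_cases hmem : D'.outDeg u + 1 ∈ F u
            · rw [if_pos hmem]; exact fun h => hwv h.symm
            · rw [if_neg hmem]; exact fun h => hwu h.symm
          rw [if_neg ht0ne, Nat.add_zero]
          have hh := hD' w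
          simp only [hF'def] at hh
          rw [if_neg hwu] at hh
          exact hh

/-- forests. A forest: every nonempty set of edges has a vertex incident
to exactly one of them. -/
theorem stmt5 {V E : Type} [Fintype E] (G : Multigraph V E)
    (hforest : ∀ T : Finset E, T.Nonempty →
      ∃ v : V, (T.filter fun e => v ∈ G.ends e).card = 1)
    (F : V → Finset ℕ) (hF : ∀ v, 2 * (F v).card < G.deg v) :
    ∃ D : G.Orientation, D.Avoids F :=
  main_aux (Fintype.card E) V E G rfl hforest F (fun v _ => hF v)
end

section
/- Let G be a graph that decomposes into a bipartite graph and a subgraph H with maximum degree Δ(H) ≤ 2 such that every vertex v with d_H(v) = 2 has d_G(v) even. If F : V(G) → 2^ℕ satisfies |F(v)| < d_G(v)/2 for all v, then G admits an F-avoiding orientation. -/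
attribute [local instance] Classical.propDecidable

/-!
Orient `H` arbitrarily and let `h(v)` be the resulting out-degree. As `d_H(v) ≤ 2`, and `d_G(v)`
is even when `d_H(v) = 2`, the bound `2|F(v)| < d_G(v)` gives `2|F(v)| ≤ d_B(v)` for the
bipartite rest `B`, so it suffices to orient `B` avoiding the shifted lists `F(v) - h(v)`.

For `B` bipartite with sides given by `c`, put a variable `x_e ∈ {0, 1}` on each edge, `x_e = 1`
meaning that `e` leaves its `c = true` end. The out-degree of `v` is then an affine form
`±∑_{e ∋ v} x_e + const`, and we look for a point where `∏_v ∏_{k ∈ F(v)} (outdeg_v(x) - k)` does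
not vanish. Since every edge has two ends, Hall's theorem yields pairwise disjoint sets of `|F(v)|`
edges at each `v`; the coefficient of the corresponding squarefree monomial of top degree is, up
to sign, a positive count, and the Combinatorial Nullstellensatz on `{0, 1}^E` finishes.
-/

open Finset MvPolynomial

namespace MvPolynomial

theorem coeff_prod_add_C_of_degree_eq_card {R σ ι : Type*} [CommSemiring R] (s : Finset ι)
    (ℓ : ι → MvPolynomial σ R) (a : ι → R) (hℓ : ∀ i ∈ s, (ℓ i).totalDegree ≤ 1)
    {d : σ →₀ ℕ} (hd : d.degree = #s) :
    coeff d (∏ i ∈ s, (ℓ i + C (a i))) = coeff d (∏ i ∈ s, ℓ i) := by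
  rw [prod_add, coeff_sum, sum_eq_single_of_mem s (mem_powerset_self s)]
  · simp
  intro K hK hKs
  apply coeff_eq_zero_of_totalDegree_lt
  have hK' : #K < #s := card_lt_card (ssubset_of_subset_of_ne (mem_powerset.1 hK) hKs)
  calc ((∏ i ∈ K, ℓ i) * ∏ i ∈ s \ K, C (a i)).totalDegree
      ≤ (∏ i ∈ K, ℓ i).totalDegree + (∏ i ∈ s \ K, C (a i) : MvPolynomial σ R).totalDegree :=
        totalDegree_mul _ _
    _ ≤ ∑ i ∈ K, (ℓ i).totalDegree + 0 := by
        rw [← map_prod, totalDegree_C]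
        exact add_le_add_left (totalDegree_finsetProd _ _) _
    _ ≤ #K := by
        simpa using sum_le_sum fun i hi => hℓ i (mem_powerset.1 hK hi)
    _ < d.degree := hd ▸ hK'

theorem totalDegree_C_mul_sum_X_le {R σ : Type*} [CommSemiring R] (r : R) (s : Finset σ) :
    (C r * ∑ e ∈ s, X e : MvPolynomial σ R).totalDegree ≤ 1 :=
  ((IsHomogeneous.sum s _ 1 fun e _ => isHomogeneous_X R e).C_mul r).totalDegree_le

theorem coeff_mul_le_coeff_add {σ : Type*} (p q : MvPolynomial σ ℕ) (d₁ d₂ : σ →₀ ℕ) :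
    coeff d₁ p * coeff d₂ q ≤ coeff (d₁ + d₂) (p * q) := by
  have hd : (d₁, d₂) ∈ antidiagonal (d₁ + d₂) := mem_antidiagonal.2 rfl
  rw [coeff_mul]
  exact single_le_sum (f := fun x : (σ →₀ ℕ) × (σ →₀ ℕ) => coeff x.1 p * coeff x.2 q)
    (fun _ _ => Nat.zero_le _) hd

theorem coeff_sum_single_prod_sum_X_pos {σ ι : Type*} (s : Finset ι) (N : ι → Finset σ)
    (g : ι → σ) (hg : ∀ i ∈ s, g i ∈ N i) :
    0 < coeff (∑ i ∈ s, Finsupp.single (g i) 1) (∏ i ∈ s, ∑ e ∈ N i, X e : MvPolynomial σ ℕ) := by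
  induction s using Finset.induction_on with
  | empty => simp
  | insert i s hi ih =>
    rw [sum_insert hi, prod_insert hi]
    have hX : coeff (Finsupp.single (g i) 1) (∑ e ∈ N i, X e : MvPolynomial σ ℕ) = 1 := by
      rw [coeff_sum, sum_eq_single_of_mem (g i) (hg i (mem_insert_self i s))] <;> simp_all
    calc 0 < coeff (Finsupp.single (g i) 1) (∑ e ∈ N i, X e : MvPolynomial σ ℕ) *
          coeff (∑ j ∈ s, Finsupp.single (g j) 1) (∏ j ∈ s, ∑ e ∈ N j, X e) := by
          rw [hX, one_mul]
          exact ih fun j hj => hg j (mem_insert_of_mem hj)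
      _ ≤ _ := coeff_mul_le_coeff_add _ _ _ _

theorem coeff_sum_single_prod_sum_X_ne_zero {R σ ι : Type*} [CommSemiring R] [CharZero R]
    (s : Finset ι) (N : ι → Finset σ) (g : ι → σ) (hg : ∀ i ∈ s, g i ∈ N i) :
    coeff (∑ i ∈ s, Finsupp.single (g i) 1) (∏ i ∈ s, ∑ e ∈ N i, X e : MvPolynomial σ R) ≠ 0 := by
  have := coeff_sum_single_prod_sum_X_pos s N g hg
  have hmap : (∏ i ∈ s, ∑ e ∈ N i, X e : MvPolynomial σ R) =
      map (Nat.castRingHom R) (∏ i ∈ s, ∑ e ∈ N i, X e) := by simp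
  rw [hmap, coeff_map]
  exact Nat.cast_ne_zero.2 this.ne'

end MvPolynomial

theorem Finsupp.degree_sum_single_one {ι σ : Type*} (s : Finset ι) (g : ι → σ) :
    (∑ i ∈ s, single (g i) 1).degree = #s := by
  simp [map_sum]

theorem Finsupp.sum_single_one_apply_le_one {ι σ : Type*} [Fintype ι] {g : ι → σ}
    (hg : Function.Injective g) (e : σ) : (∑ i, single (g i) 1) e ≤ 1 := by
  rw [finsetSum_apply]
  simp only [single_apply]
  rw [sum_boole]
  exact card_le_one.2 fun i hi j hj => hg ((mem_filter.1 hi).2.trans (mem_filter.1 hj).2.symm)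

theorem Finset.card_filter_eq_card_filter_not_and_add_card_filter_subtype {α : Type*} [Fintype α]
    (p q : α → Prop) [DecidablePred p] [DecidablePred q] :
    #{a | q a} = #{a | ¬ p a ∧ q a} + #{a : {a // p a} | q a} := by
  have hsub : #{a : {a // p a} | q a} = #{a | p a ∧ q a} := by
    rw [← card_map (Function.Embedding.subtype p)]
    congr 1
    ext a
    simp [and_comm]
  rw [hsub, ← card_filter_add_card_filter_not (s := {a | q a}) (¬ p ·), filter_filter,
    filter_filter]
  simp only [and_comm, not_not]

namespace Multigraph

variable {V E : Type} (G : Multigraph V E)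

theorem nonempty_orientation : Nonempty G.Orientation :=
  ⟨⟨fun e => (G.ends e).out.1, fun e => (G.ends e).out.2, fun _ => (Quot.out_eq _).symm⟩⟩

theorem exists_ends_true_false {c : V → Bool} (hc : ∀ e, ∃ a b, G.ends e = s(a, b) ∧ c a ≠ c b)
    (e : E) : ∃ a b, G.ends e = s(a, b) ∧ c a = true ∧ c b = false := by
  obtain ⟨a, b, hab, hne⟩ := hc e
  cases ha : c a
  · exact ⟨b, a, hab.trans Sym2.eq_swap, by simpa [ha] using hne.symm, ha⟩
  · exact ⟨a, b, hab, ha, by simpa [ha] using hne.symm⟩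

noncomputable def orientBy (a b : E → V) (hab : ∀ e, G.ends e = s(a e, b e)) (U : Finset E) :
    G.Orientation where
  tail e := if e ∈ U then a e else b e
  head e := if e ∈ U then b e else a e
  consistent e := by
    split_ifs
    · exact hab e
    · exact (hab e).trans Sym2.eq_swap

def restrict (p : E → Prop) : Multigraph V {e // p e} where
  ends e := G.ends e
  loopless e := G.loopless e

noncomputable def Orientation.override {G : Multigraph V E} {p : E → Prop} (D : G.Orientation)
    (D' : (G.restrict p).Orientation) : G.Orientation where
  tail e := if h : p e then D'.tail ⟨e, h⟩ else D.tail e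
  head e := if h : p e then D'.head ⟨e, h⟩ else D.head e
  consistent e := by
    split_ifs with h
    exacts [D'.consistent ⟨e, h⟩, D.consistent e]

variable [Fintype E]

noncomputable def incidence (v : V) : Finset E := {e | v ∈ G.ends e}

theorem card_incidence (v : V) : #(G.incidence v) = G.deg v := rfl

theorem sum_deg_le_two_mul_card_biUnion_incidence (W : Finset V) :
    ∑ v ∈ W, G.deg v ≤ 2 * #(W.biUnion G.incidence) := by
  set B := W.biUnion G.incidence
  have hcount := sum_card_bipartiteAbove_eq_sum_card_bipartiteBelow (s := W) (t := B)
    (r := fun v e => v ∈ G.ends e)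
  have habove : ∀ v ∈ W, B.bipartiteAbove (fun v e => v ∈ G.ends e) v = G.incidence v := by
    intro v hv
    ext e
    simp only [bipartiteAbove, mem_filter, incidence, mem_univ, true_and, B, mem_biUnion]
    exact ⟨And.right, fun he => ⟨⟨v, hv, he⟩, he⟩⟩
  have hbelow : ∀ e ∈ B, #(W.bipartiteBelow (fun v e => v ∈ G.ends e) e) ≤ 2 := by
    intro e _
    calc #(W.bipartiteBelow (fun v e => v ∈ G.ends e) e) ≤ #(G.ends e).toFinset :=
          card_le_card fun v hv => Sym2.mem_toFinset.2 (mem_filter.1 hv).2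
      _ ≤ 2 := by rw [Sym2.card_toFinset]; split <;> omega
  calc ∑ v ∈ W, G.deg v = ∑ v ∈ W, #(B.bipartiteAbove (fun v e => v ∈ G.ends e) v) :=
        sum_congr rfl fun v hv => by rw [habove v hv, card_incidence]
    _ = ∑ e ∈ B, #(W.bipartiteBelow (fun v e => v ∈ G.ends e) e) := hcount
    _ ≤ ∑ _e ∈ B, 2 := sum_le_sum hbelow
    _ = 2 * #B := by rw [sum_const, smul_eq_mul, mul_comm]

theorem exists_injective_incidence {α : Type*} (Vs : Finset V) (F : V → Finset α)
    (hF : ∀ v, 2 * #(F v) ≤ G.deg v) :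
    ∃ g : Vs.sigma F → E, Function.Injective g ∧ ∀ q, g q ∈ G.incidence q.1.1 := by
  refine (all_card_le_biUnion_card_iff_exists_injective _).1 fun A => ?_
  set W := A.image fun q => q.1.1
  have hA : #A ≤ ∑ v ∈ W, #(F v) := by
    rw [← card_sigma, ← card_map (Function.Embedding.subtype _)]
    refine card_le_card fun q hq => ?_
    obtain ⟨q, hqA, rfl⟩ := mem_map.1 hq
    exact mem_sigma.2 ⟨mem_image_of_mem _ hqA, (mem_sigma.1 q.2).2⟩
  have hW := G.sum_deg_le_two_mul_card_biUnion_incidence W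
  have hFW : 2 * ∑ v ∈ W, #(F v) ≤ ∑ v ∈ W, G.deg v := by
    rw [mul_sum]
    exact sum_le_sum fun v _ => hF v
  rw [image_biUnion] at hW
  omega

theorem outDeg_orientBy {c : V → Bool} {a b : E → V} (hab : ∀ e, G.ends e = s(a e, b e))
    (ha : ∀ e, c (a e) = true) (hb : ∀ e, c (b e) = false) (U : Finset E) (v : V) :
    (G.orientBy a b hab U).outDeg v =
      if c v then #(G.incidence v ∩ U) else #(G.incidence v \ U) := by
  unfold Orientation.outDeg orientBy incidence
  split_ifs with hv <;> congr 1 <;> ext e <;> have := ha e <;> have := hb e <;>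
    by_cases he : e ∈ U <;> aesop

noncomputable def outDegPoly (R : Type*) [CommRing R] (c : V → Bool) (v : V) : MvPolynomial E R :=
  C (if c v then 1 else -1) * ∑ e ∈ G.incidence v, X e + C (if c v then 0 else (G.deg v : R))

theorem eval_outDegPoly {R : Type*} [CommRing R] {c : V → Bool} {a b : E → V}
    (hab : ∀ e, G.ends e = s(a e, b e)) (ha : ∀ e, c (a e) = true) (hb : ∀ e, c (b e) = false)
    (U : Finset E) (v : V) :
    eval (fun e => if e ∈ U then 1 else 0) (G.outDegPoly R c v) =
      (G.orientBy a b hab U).outDeg v := by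
  have hsum : eval (fun e => if e ∈ U then (1 : R) else 0) (∑ e ∈ G.incidence v, X e) =
      #(G.incidence v ∩ U) := by simp
  have hsplit := card_sdiff_add_card_inter (G.incidence v) U
  rw [outDeg_orientBy G hab ha hb, outDegPoly, eval_add, eval_mul, hsum, eval_C, eval_C]
  split_ifs
  · simp
  · rw [← card_incidence]
    push_cast [← hsplit]
    ring

theorem totalDegree_outDegPoly_le {R : Type*} [CommRing R] (c : V → Bool) (v : V) :
    (G.outDegPoly R c v).totalDegree ≤ 1 :=
  (totalDegree_add _ _).trans (max_le (totalDegree_C_mul_sum_X_le _ _) (by simp))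

theorem coeff_prod_outDegPoly_sub_C_ne_zero {R : Type*} [CommRing R] [IsDomain R] [CharZero R]
    (c : V → Bool) (Sg : Finset (Σ _ : V, ℕ)) (g : Sg → E) (hg : ∀ q, g q ∈ G.incidence q.1.1) :
    coeff (∑ q, Finsupp.single (g q) 1) (∏ q ∈ Sg, (G.outDegPoly R c q.1 - C (q.2 : R))) ≠ 0 := by
  simp only [outDegPoly, add_sub_assoc, ← C_sub]
  rw [coeff_prod_add_C_of_degree_eq_card _ _ _ (fun _ _ => totalDegree_C_mul_sum_X_le _ _)
    (by rw [Finsupp.degree_sum_single_one, card_univ, Fintype.card_coe]),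
    prod_mul_distrib, ← map_prod, coeff_C_mul]
  refine mul_ne_zero (prod_ne_zero_iff.2 fun q _ => by split <;> simp) ?_
  rw [← prod_coe_sort Sg]
  exact coeff_sum_single_prod_sum_X_ne_zero (R := R) univ _ g fun q _ => hg q

theorem exists_avoids_of_bipartite (c : V → Bool)
    (hc : ∀ e, ∃ a b, G.ends e = s(a, b) ∧ c a ≠ c b) (F : V → Finset ℕ)
    (hF : ∀ v, 2 * #(F v) ≤ G.deg v) : ∃ D : G.Orientation, D.Avoids F := by
  choose a b hab ha hb using G.exists_ends_true_false hc
  set Vs := univ.biUnion fun e => (G.ends e).toFinset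
  obtain ⟨g, hg_inj, hg⟩ := G.exists_injective_incidence Vs F hF
  set f := ∏ q ∈ Vs.sigma F, (G.outDegPoly ℚ c q.1 - C (q.2 : ℚ))
  set t := ∑ q, Finsupp.single (g q) 1
  have hcoeff : coeff t f ≠ 0 := G.coeff_prod_outDegPoly_sub_C_ne_zero c _ g hg
  have hdeg : f.totalDegree = t.degree := by
    refine le_antisymm ?_ (le_totalDegree (mem_support_iff.2 hcoeff))
    calc f.totalDegree ≤ ∑ q ∈ Vs.sigma F, (G.outDegPoly ℚ c q.1 - C (q.2 : ℚ)).totalDegree :=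
          totalDegree_finsetProd _ _
      _ ≤ ∑ _q ∈ Vs.sigma F, 1 := by
          gcongr with q
          exact (totalDegree_sub_C_le _ _).trans (G.totalDegree_outDegPoly_le c _)
      _ = t.degree := by rw [Finsupp.degree_sum_single_one, card_univ, Fintype.card_coe]; simp
  have ht : ∀ e, t e < #({0, 1} : Finset ℚ) := fun e =>
    (Finsupp.sum_single_one_apply_le_one hg_inj e).trans_lt (by simp)
  obtain ⟨x, hx, hfx⟩ := combinatorial_nullstellensatz_exists_eval_nonzero f t hcoeff hdeg _ ht
  set U : Finset E := {e | x e = 1}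
  have hxU : x = fun e => if e ∈ U then 1 else 0 := by
    funext e
    rcases mem_insert.1 (hx e) with h | h <;> simp_all [U]
  refine ⟨G.orientBy a b hab U, fun v hv => hfx ?_⟩
  have hvVs : v ∈ Vs := by
    have hdeg_pos : 0 < #(G.incidence v) := by
      have := card_pos.2 ⟨_, hv⟩
      have := hF v
      rw [card_incidence]
      omega
    obtain ⟨e, he⟩ := card_pos.1 hdeg_pos
    exact mem_biUnion.2 ⟨e, mem_univ e, Sym2.mem_toFinset.2 (mem_filter.1 he).2⟩
  rw [hxU, eval_prod]
  refine prod_eq_zero (i := ⟨v, (G.orientBy a b hab U).outDeg v⟩) (mem_sigma.2 ⟨hvVs, hv⟩) ?_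
  rw [eval_sub, eval_outDegPoly G hab ha hb, eval_C, sub_self]

theorem deg_eq_add_deg_restrict (p : E → Prop) [DecidablePred p] (v : V) :
    G.deg v = #{e | ¬ p e ∧ v ∈ G.ends e} + (G.restrict p).deg v :=
  card_filter_eq_card_filter_not_and_add_card_filter_subtype p (v ∈ G.ends ·)

theorem Orientation.outDeg_override {G : Multigraph V E} {p : E → Prop} [DecidablePred p]
    (D : G.Orientation) (D' : (G.restrict p).Orientation) (v : V) :
    (D.override D').outDeg v = #{e | ¬ p e ∧ D.tail e = v} + D'.outDeg v := by
  unfold outDeg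
  rw [card_filter_eq_card_filter_not_and_add_card_filter_subtype p]
  congr 2 <;> ext e <;> simp only [mem_filter, mem_univ, true_and]
  · by_cases h : p e <;> simp [override, h]
  · simp [override, e.2]

end Multigraph

/-- `EH` is the edge set of `H`. -/
theorem stmt7 {V E : Type} [Fintype E] (G : Multigraph V E) (EH : Finset E)
    (c : V → Bool)
    (hbip : ∀ e ∉ EH, ∃ a b : V, G.ends e = s(a, b) ∧ c a ≠ c b)
    (hH1 : ∀ v : V, (EH.filter fun e => v ∈ G.ends e).card ≤ 2)
    (hH2 : ∀ v : V, (EH.filter fun e => v ∈ G.ends e).card = 2 → Even (G.deg v))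
    (F : V → Finset ℕ) (hF : ∀ v, 2 * (F v).card < G.deg v) :
    ∃ D : G.Orientation, D.Avoids F := by
  have hdeg_B : ∀ v, 2 * #(F v) ≤ (G.restrict (· ∉ EH)).deg v := fun v => by
    have hsplit := G.deg_eq_add_deg_restrict (· ∉ EH) v
    have hH : #{e | ¬ e ∉ EH ∧ v ∈ G.ends e} = #(EH.filter fun e => v ∈ G.ends e) := by
      congr 1
      ext e
      simp
    rw [hH] at hsplit
    have := hF v
    have := hH1 v
    by_cases h2 : #(EH.filter fun e => v ∈ G.ends e) = 2
    · obtain ⟨k, hk⟩ := hH2 v h2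
      omega
    · omega
  obtain ⟨D⟩ := G.nonempty_orientation
  -- `k - h` truncates at `0`, harmlessly: the out-degree of `D.override DB` is at least `h`.
  obtain ⟨DB, hDB⟩ := (G.restrict (· ∉ EH)).exists_avoids_of_bipartite c (fun e => hbip e e.2)
    (fun v => (F v).image (· - #{e | ¬ e ∉ EH ∧ D.tail e = v}))
    (fun v => (Nat.mul_le_mul_left 2 card_image_le).trans (hdeg_B v))
  refine ⟨D.override DB, fun v hv => hDB v (mem_image.2 ⟨_, hv, ?_⟩)⟩
  rw [Multigraph.Orientation.outDeg_override]
  omega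
end

section
/- Let G be a graph and ℓ, u : V(G) → ℕ with ℓ(v) ≤ u(v) for all v. Then G has an orientation D with ℓ(v) ≤ d⁺_D(v) ≤ u(v) for all v if and only if for every S ⊆ V(G): ∑_{x∈S} ℓ(x) ≤ e[S] + δ(S) and e[S] ≤ ∑_{x∈S} u(x), where e[S] is the number of edges with both ends in S and δ(S) is the number of edges with exactly one end in S. -/
attribute [local instance] Classical.propDecidable

/-! A deficient vertex `v` (out-degree below `l v`) lies in the set `S` of vertices from which
`v` can be reached. Every edge meeting `S` has its tail in `S`, so the lower condition for `S`
forces some `w ∈ S` to have out-degree above `l w`; reversing a directed path from `w` to `v`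
moves one unit of out-degree from `w` to `v` and strictly lowers the total distance of the
out-degrees from their intervals `[l, u]`. Excess vertices are treated dually, with the set of
vertices reachable from them and the upper condition. An orientation minimising that distance is
therefore feasible. -/

namespace Multigraph

open Finset

variable {V E : Type} {G : Multigraph V E}

namespace Orientation

variable (D : G.Orientation)

lemma mem_ends_iff {e : E} {w : V} : w ∈ G.ends e ↔ w = D.tail e ∨ w = D.head e := by
  rw [D.consistent, Sym2.mem_iff]

lemma forall_mem_ends_iff {e : E} {S : Finset V} :
    (∀ w ∈ G.ends e, w ∈ S) ↔ D.tail e ∈ S ∧ D.head e ∈ S := by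
  simp only [D.mem_ends_iff, forall_eq_or_imp, forall_eq]

lemma exists_mem_ends_iff {e : E} {S : Finset V} :
    (∃ w ∈ G.ends e, w ∈ S) ↔ D.tail e ∈ S ∨ D.head e ∈ S := by
  simp only [D.mem_ends_iff, exists_eq_or_imp, exists_eq_left]

section Counting

variable [Fintype E] (S : Finset V)

lemma eIn_eq : G.eIn S = #{e | D.tail e ∈ S ∧ D.head e ∈ S} := by
  simp only [eIn, D.forall_mem_ends_iff]

lemma eIn_add_cut_eq : G.eIn S + G.cut S = #{e | D.tail e ∈ S ∨ D.head e ∈ S} := by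
  rw [← card_filter_add_card_filter_not (s := {e | D.tail e ∈ S ∨ D.head e ∈ S})
    (fun e => D.tail e ∈ S ∧ D.head e ∈ S), filter_filter, filter_filter, eIn_eq, cut]
  simp only [D.forall_mem_ends_iff, D.exists_mem_ends_iff]
  congr 3
  ext e
  tauto

lemma sum_outDeg : ∑ v ∈ S, D.outDeg v = #{e | D.tail e ∈ S} :=
  sum_card_fiberwise_eq_card_filter _ _ _

lemma eIn_le_sum_outDeg : G.eIn S ≤ ∑ v ∈ S, D.outDeg v := by
  rw [D.eIn_eq, D.sum_outDeg]
  exact card_le_card (monotone_filter_right _ fun e _ h => h.1)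

lemma sum_outDeg_le_eIn_add_cut : ∑ v ∈ S, D.outDeg v ≤ G.eIn S + G.cut S := by
  rw [D.eIn_add_cut_eq, D.sum_outDeg]
  exact card_le_card (monotone_filter_right _ fun e _ h => Or.inl h)

lemma sum_outDeg_le_eIn {S : Finset V} (hS : ∀ e, D.tail e ∈ S → D.head e ∈ S) :
    ∑ v ∈ S, D.outDeg v ≤ G.eIn S := by
  rw [D.eIn_eq, D.sum_outDeg]
  exact card_le_card (monotone_filter_right _ fun e _ h => ⟨h, hS e h⟩)

lemma eIn_add_cut_le_sum_outDeg {S : Finset V} (hS : ∀ e, D.head e ∈ S → D.tail e ∈ S) :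
    G.eIn S + G.cut S ≤ ∑ v ∈ S, D.outDeg v := by
  rw [D.eIn_add_cut_eq, D.sum_outDeg]
  exact card_le_card (monotone_filter_right _ fun e _ h => h.elim id (hS e))

end Counting

noncomputable def reverseAt (e : E) : G.Orientation where
  tail f := if f = e then D.head f else D.tail f
  head f := if f = e then D.tail f else D.head f
  consistent f := by
    split_ifs
    · rw [D.consistent, Sym2.eq_swap]
    · exact D.consistent f

lemma reverseAt_tail_self (e : E) : (D.reverseAt e).tail e = D.head e := if_pos rfl

lemma reverseAt_tail_of_ne {e f : E} (h : f ≠ e) : (D.reverseAt e).tail f = D.tail f := if_neg h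

lemma reverseAt_head_of_ne {e f : E} (h : f ≠ e) : (D.reverseAt e).head f = D.head f := if_neg h

lemma outDeg_reverseAt [Fintype E] (e : E) (x : V) :
    (D.reverseAt e).outDeg x + (if x = D.tail e then 1 else 0) =
      D.outDeg x + (if x = D.head e then 1 else 0) := by
  have hrest : ∑ f ∈ univ.erase e, (if (D.reverseAt e).tail f = x then 1 else 0) =
      ∑ f ∈ univ.erase e, (if D.tail f = x then 1 else 0) :=
    sum_congr rfl fun f hf => by rw [D.reverseAt_tail_of_ne (ne_of_mem_erase hf)]
  rw [outDeg, outDeg, card_filter, card_filter, ← add_sum_erase _ _ (mem_univ e),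
    ← add_sum_erase _ _ (mem_univ e), hrest, reverseAt_tail_self]
  simp only [@eq_comm _ x]
  split_ifs <;> omega

inductive IsWalk : V → V → List E → Prop
  | nil (a : V) : IsWalk a a []
  | cons {b : V} {e : E} {L : List E} : IsWalk (D.head e) b L → IsWalk (D.tail e) b (e :: L)

variable {D}

lemma isWalk_cons_iff {a b : V} {e : E} {L : List E} :
    D.IsWalk a b (e :: L) ↔ a = D.tail e ∧ D.IsWalk (D.head e) b L := by
  constructor
  · rintro ⟨⟩
    exact ⟨rfl, ‹_›⟩
  · rintro ⟨rfl, h⟩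
    exact h.cons

lemma IsWalk.right_of_append {a b : V} {L₁ L₂ : List E} (h : D.IsWalk a b (L₁ ++ L₂)) :
    ∃ c, D.IsWalk c b L₂ := by
  induction L₁ generalizing a with
  | nil => exact ⟨a, h⟩
  | cons e L₁ ih => exact ih (isWalk_cons_iff.1 h).2

lemma IsWalk.reverseAt {a b : V} {L : List E} (h : D.IsWalk a b L) {e : E} (he : e ∉ L) :
    (D.reverseAt e).IsWalk a b L := by
  induction h with
  | nil a => exact .nil a
  | @cons b f L _ ih =>
    have hf : f ≠ e := fun h => he (h ▸ List.mem_cons_self)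
    rw [← D.reverseAt_tail_of_ne hf]
    refine .cons ?_
    rw [D.reverseAt_head_of_ne hf]
    exact ih fun h => he (List.mem_cons_of_mem _ h)

lemma Reach.exists_isWalk_nodup {a b : V} (h : D.Reach a b) :
    ∃ L, D.IsWalk a b L ∧ L.Nodup := by
  induction h using Relation.ReflTransGen.head_induction_on with
  | refl => exact ⟨[], .nil b, List.nodup_nil⟩
  | head hstep _ ih =>
    obtain ⟨e, rfl, rfl⟩ := hstep
    obtain ⟨L, hL, hnd⟩ := ih
    by_cases he : e ∈ L
    · obtain ⟨L₁, L₂, rfl⟩ := List.append_of_mem he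
      obtain ⟨c, hc⟩ := hL.right_of_append
      exact ⟨e :: L₂, .cons (isWalk_cons_iff.1 hc).2, hnd.sublist (List.sublist_append_right _ _)⟩
    · exact ⟨e :: L, hL.cons, List.nodup_cons.2 ⟨he, hnd⟩⟩

variable [Fintype E]

lemma IsWalk.exists_shift {a b : V} {L : List E} (h : D.IsWalk a b L) (hL : L.Nodup) :
    ∃ D' : G.Orientation, ∀ x,
      D'.outDeg x + (if x = a then 1 else 0) = D.outDeg x + (if x = b then 1 else 0) := by
  induction L generalizing D a with
  | nil =>
    cases h
    exact ⟨D, fun x => rfl⟩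
  | cons e L ih =>
    obtain ⟨rfl, hw⟩ := isWalk_cons_iff.1 h
    obtain ⟨he, hL⟩ := List.nodup_cons.1 hL
    obtain ⟨D', hD'⟩ := ih (hw.reverseAt he) hL
    refine ⟨D', fun x => ?_⟩
    have := hD' x
    have := D.outDeg_reverseAt e x
    omega

lemma Reach.exists_shift {a b : V} (h : D.Reach a b) :
    ∃ D' : G.Orientation, ∀ x,
      D'.outDeg x + (if x = a then 1 else 0) = D.outDeg x + (if x = b then 1 else 0) :=
  let ⟨_, hL, hnd⟩ := h.exists_isWalk_nodup
  hL.exists_shift hnd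

variable [Fintype V] {l u : V → ℕ}

lemma exists_reach_lt_outDeg (hl : ∀ S : Finset V, ∑ x ∈ S, l x ≤ G.eIn S + G.cut S) {v : V}
    (hv : D.outDeg v < l v) : ∃ w, D.Reach w v ∧ l w < D.outDeg w := by
  set S : Finset V := {w | D.Reach w v}
  have hclosed : ∀ e, D.head e ∈ S → D.tail e ∈ S := fun e he => by
    simp only [S, mem_filter_univ] at he ⊢
    exact Relation.ReflTransGen.head ⟨e, rfl, rfl⟩ he
  by_contra! h
  have hlt : ∑ w ∈ S, D.outDeg w < ∑ w ∈ S, l w :=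
    sum_lt_sum (fun w hw => h w ((mem_filter_univ w).1 hw)) ⟨v, (mem_filter_univ v).2 .refl, hv⟩
  have := (hl S).trans (D.eIn_add_cut_le_sum_outDeg hclosed)
  omega

lemma exists_reach_outDeg_lt (hu : ∀ S : Finset V, G.eIn S ≤ ∑ x ∈ S, u x) {v : V}
    (hv : u v < D.outDeg v) : ∃ w, D.Reach v w ∧ D.outDeg w < u w := by
  set S : Finset V := {w | D.Reach v w}
  have hclosed : ∀ e, D.tail e ∈ S → D.head e ∈ S := fun e he => by
    simp only [S, mem_filter_univ] at he ⊢
    exact Relation.ReflTransGen.tail he ⟨e, rfl, rfl⟩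
  by_contra! h
  have hlt : ∑ w ∈ S, u w < ∑ w ∈ S, D.outDeg w :=
    sum_lt_sum (fun w hw => h w ((mem_filter_univ w).1 hw)) ⟨v, (mem_filter_univ v).2 .refl, hv⟩
  have := (D.sum_outDeg_le_eIn hclosed).trans (hu S)
  omega

end Orientation

instance : Nonempty G.Orientation :=
  ⟨{ tail := fun e => (G.ends e).out.1
     head := fun e => (G.ends e).out.2
     consistent := fun _ => (Quot.out_eq _).symm }⟩

variable [Fintype V] [Fintype E]

/-- The total distance of the out-degrees from the intervals `[l v, u v]`, written with truncated
subtraction. -/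
noncomputable def violation (l u : V → ℕ) (D : G.Orientation) : ℕ :=
  ∑ v, ((l v - D.outDeg v) + (D.outDeg v - u v))

lemma violation_lt_of_shift {l u : V → ℕ} {D D' : G.Orientation} {p q : V} (hpq : p ≠ q)
    (hD' : ∀ x, D'.outDeg x + (if x = p then 1 else 0) = D.outDeg x + (if x = q then 1 else 0))
    (hp : l p < D.outDeg p) (hq : D.outDeg q < u q)
    (hstrict : u p < D.outDeg p ∨ D.outDeg q < l q) :
    violation l u D' < violation l u D := by
  have hle : ∀ x, (l x - D'.outDeg x) + (D'.outDeg x - u x) ≤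
      (l x - D.outDeg x) + (D.outDeg x - u x) := fun x => by
    have := hD' x
    split_ifs at this <;> subst_vars <;> omega
  obtain ⟨x, hx⟩ : ∃ x, (l x - D'.outDeg x) + (D'.outDeg x - u x) <
      (l x - D.outDeg x) + (D.outDeg x - u x) := by
    have hp' := hD' p
    have hq' := hD' q
    rw [if_pos rfl, if_neg hpq] at hp'
    rw [if_neg hpq.symm, if_pos rfl] at hq'
    rcases hstrict with h | h
    · exact ⟨p, by omega⟩
    · exact ⟨q, by omega⟩
  exact sum_lt_sum (fun x _ => hle x) ⟨x, mem_univ x, hx⟩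

theorem exists_orientation_of_forall_le {l u : V → ℕ} (hlu : ∀ v, l v ≤ u v)
    (hl : ∀ S : Finset V, ∑ x ∈ S, l x ≤ G.eIn S + G.cut S)
    (hu : ∀ S : Finset V, G.eIn S ≤ ∑ x ∈ S, u x) :
    ∃ D : G.Orientation, ∀ v, l v ≤ D.outDeg v ∧ D.outDeg v ≤ u v := by
  obtain ⟨D, hmin⟩ : ∃ D : G.Orientation, ∀ D', violation l u D ≤ violation l u D' :=
    ⟨Function.argmin (violation l u), fun D' => Function.argmin_le _ D'⟩
  refine ⟨D, fun v => ⟨not_lt.1 fun hv => ?_, not_lt.1 fun hv => ?_⟩⟩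
  · obtain ⟨w, hreach, hw⟩ := D.exists_reach_lt_outDeg hl hv
    obtain ⟨D', hD'⟩ := hreach.exists_shift
    have hwv : w ≠ v := by rintro rfl; omega
    exact (hmin D').not_gt
      (violation_lt_of_shift hwv hD' hw (hv.trans_le (hlu v)) (.inr hv))
  · obtain ⟨w, hreach, hw⟩ := D.exists_reach_outDeg_lt hu hv
    obtain ⟨D', hD'⟩ := hreach.exists_shift
    have hvw : v ≠ w := by rintro rfl; omega
    exact (hmin D').not_gt
      (violation_lt_of_shift hvw hD' ((hlu v).trans_lt hv) hw (.inl hv))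

end Multigraph

/-- the Frank–Gyárfás orientation theorem. -/
theorem stmt9 {V E : Type} [Fintype V] [Fintype E] (G : Multigraph V E)
    (l u : V → ℕ) (hlu : ∀ v, l v ≤ u v) :
    (∃ D : G.Orientation, ∀ v, l v ≤ D.outDeg v ∧ D.outDeg v ≤ u v) ↔
      (∀ S : Finset V,
        (∑ x ∈ S, l x) ≤ G.eIn S + G.cut S ∧ G.eIn S ≤ ∑ x ∈ S, u x) := by
  refine ⟨fun ⟨D, hD⟩ S => ⟨?_, ?_⟩,
    fun h => G.exists_orientation_of_forall_le hlu (fun S => (h S).1) (fun S => (h S).2)⟩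
  · calc ∑ x ∈ S, l x ≤ ∑ x ∈ S, D.outDeg x := Finset.sum_le_sum fun x _ => (hD x).1
      _ ≤ G.eIn S + G.cut S := D.sum_outDeg_le_eIn_add_cut S
  · calc G.eIn S ≤ ∑ x ∈ S, D.outDeg x := D.eIn_le_sum_outDeg S
      _ ≤ ∑ x ∈ S, u x := Finset.sum_le_sum fun x _ => (hD x).2
end

section
/- Let D be an orientation of a graph G and v a vertex with S_v ∩ T_v = {v}, where S_v is the set of vertices reachable from v by directed paths and T_v the set of vertices that can reach v. If S_v contains no sinks, then D contains an out-lasso starting at v: a directed path v = v₁ → v₂ → ⋯ → v_k with k ≥ 3 together with an edge v_k → v_i for some 2 ≤ i ≤ k−1. -/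
attribute [local instance] Classical.propDecidable

theorem found {V E : Type} [Fintype V] [Fintype E] (G : Multigraph V E)
    (D : G.Orientation) (v : V)
    (hST : ∀ w, D.Reach v w → D.Reach w v → w = v)
    (k : ℕ) (p : ℕ → V) (i : ℕ) (hi1 : 1 ≤ i) (hik : i ≤ k) (hp1 : p 1 = v)
    (hdist : ∀ a b, 1 ≤ a → a < b → b ≤ k → p a ≠ p b)
    (hpath : ∀ j, 1 ≤ j → j < k → ∃ e, D.tail e = p j ∧ D.head e = p (j + 1))
    (hreach : D.Reach v (p k))
    (e : E) (ht : D.tail e = p k) (hh : D.head e = p i) :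
    ∃ (k : ℕ) (p : ℕ → V) (i : ℕ), 3 ≤ k ∧ 2 ≤ i ∧ i < k ∧ p 1 = v ∧
      (∀ a b, 1 ≤ a → a < b → b ≤ k → p a ≠ p b) ∧
      (∀ j, 1 ≤ j → j < k → ∃ e, D.tail e = p j ∧ D.head e = p (j + 1)) ∧
      (∃ e, D.tail e = p k ∧ D.head e = p i) := by
  have hne : D.tail e ≠ D.head e := by
    intro h
    exact G.loopless e (by rw [D.consistent e, Sym2.mk_isDiag_iff]; exact h)
  have hik' : i < k := by
    rcases lt_or_eq_of_le hik with h | h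
    · exact h
    · exact absurd (by rw [ht, hh, h]) hne
  have hi2 : 2 ≤ i := by
    rcases Nat.lt_or_ge i 2 with h | h
    · exfalso
      interval_cases i
      have hrv : D.Reach (p k) v := by
        refine Relation.ReflTransGen.single ⟨e, ht, ?_⟩
        rw [hh, hp1]
      have := hST (p k) hreach hrv
      exact hdist 1 k le_rfl (by omega) le_rfl (by rw [hp1, this])
    · exact h
  exact ⟨k, p, i, by omega, hi2, hik', hp1, hdist, hpath, ⟨e, ht, hh⟩⟩

theorem auxmain {V E : Type} [Fintype V] [Fintype E] (G : Multigraph V E)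
    (D : G.Orientation) (v : V)
    (hST : ∀ w, D.Reach v w → D.Reach w v → w = v)
    (hnosink : ∀ w, D.Reach v w → ∃ e, D.tail e = w) :
    ∀ (n k : ℕ) (p : ℕ → V), 1 ≤ k → Fintype.card V ≤ k + n → p 1 = v →
      (∀ a b, 1 ≤ a → a < b → b ≤ k → p a ≠ p b) →
      (∀ j, 1 ≤ j → j < k → ∃ e, D.tail e = p j ∧ D.head e = p (j + 1)) →
      D.Reach v (p k) →
    ∃ (k : ℕ) (p : ℕ → V) (i : ℕ), 3 ≤ k ∧ 2 ≤ i ∧ i < k ∧ p 1 = v ∧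
      (∀ a b, 1 ≤ a → a < b → b ≤ k → p a ≠ p b) ∧
      (∀ j, 1 ≤ j → j < k → ∃ e, D.tail e = p j ∧ D.head e = p (j + 1)) ∧
      (∃ e, D.tail e = p k ∧ D.head e = p i) := by
  intro n
  induction n with
  | zero =>
    intro k p hk hcard hp1 hdist hpath hreach
    obtain ⟨e, ht⟩ := hnosink (p k) hreach
    by_cases hrep : ∃ i, 1 ≤ i ∧ i ≤ k ∧ p i = D.head e
    · obtain ⟨i, hi1, hik, hpi⟩ := hrep
      exact found G D v hST k p i hi1 hik hp1 hdist hpath hreach e ht hpi.symm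
    · exfalso
      push_neg at hrep
      set p' : ℕ → V := fun j => if j = k + 1 then D.head e else p j with hp'
      have hinj : Set.InjOn p' (Finset.Icc 1 (k + 1)) := by
        intro a ha b hb hab
        simp only [Finset.coe_Icc, Set.mem_Icc] at ha hb
        by_contra hne
        have key : ∀ a b : ℕ, 1 ≤ a ∧ a ≤ k + 1 → 1 ≤ b ∧ b ≤ k + 1 → a < b →
            p' a = p' b → False := by
          intro a b ha hb h hab
          simp only [hp'] at hab
          by_cases hb1 : b = k + 1
          · rw [if_pos hb1, if_neg (by omega)] at hab
            exact hrep a ha.1 (by omega) hab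
          · rw [if_neg (by omega), if_neg hb1] at hab
            exact hdist a b ha.1 h (by omega) hab
        rcases Nat.lt_or_ge a b with h | h
        · exact key a b ha hb h hab
        · exact key b a hb ha (by omega) hab.symm
      have := Finset.card_le_card_of_injOn p' (fun x _ => Finset.mem_univ (p' x)) hinj
      rw [Nat.card_Icc] at this
      simp only [Finset.card_univ] at this
      omega
  | succ n ih =>
    intro k p hk hcard hp1 hdist hpath hreach
    obtain ⟨e, ht⟩ := hnosink (p k) hreach
    by_cases hrep : ∃ i, 1 ≤ i ∧ i ≤ k ∧ p i = D.head e
    · obtain ⟨i, hi1, hik, hpi⟩ := hrep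
      exact found G D v hST k p i hi1 hik hp1 hdist hpath hreach e ht hpi.symm
    · push_neg at hrep
      set p' : ℕ → V := fun j => if j = k + 1 then D.head e else p j with hp'
      have hpk : p' (k + 1) = D.head e := by simp [hp']
      have hplt : ∀ j, j ≤ k → p' j = p j := by
        intro j hj; simp only [hp', if_neg (by omega : ¬ j = k + 1)]
      refine ih (k + 1) p' (by omega) (by omega) (by rw [hplt 1 hk]; exact hp1) ?_ ?_ ?_
      · intro a b ha hab hb
        by_cases hb1 : b = k + 1
        · rw [hplt a (by omega), hb1, hpk]
          exact hrep a ha (by omega)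
        · rw [hplt a (by omega), hplt b (by omega)]
          exact hdist a b ha hab (by omega)
      · intro j hj hjk
        by_cases hjk' : j = k
        · refine ⟨e, ?_, ?_⟩
          · rw [hplt j (by omega), hjk', ht]
          · rw [hjk', hpk]
        · rw [hplt j (by omega), hplt (j + 1) (by omega)]
          exact hpath j hj (by omega)
      · rw [hpk]
        exact hreach.tail ⟨e, ht, rfl⟩


/-- if `S_v ∩ T_v = {v}` and `S_v` has no sinks, then there is an
out-lasso starting at `v`: a directed path `v = p 1 → ⋯ → p k` (`k ≥ 3`) together with
an edge from `p k` to `p i` for some `2 ≤ i ≤ k - 1`. -/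
theorem stmt14 {V E : Type} [Fintype V] [Fintype E] (G : Multigraph V E)
    (D : G.Orientation) (v : V)
    (hST : ∀ w, D.Reach v w → D.Reach w v → w = v)
    (hnosink : ∀ w, D.Reach v w → ∃ e, D.tail e = w) :
    ∃ (k : ℕ) (p : ℕ → V) (i : ℕ), 3 ≤ k ∧ 2 ≤ i ∧ i < k ∧ p 1 = v ∧
      (∀ a b, 1 ≤ a → a < b → b ≤ k → p a ≠ p b) ∧
      (∀ j, 1 ≤ j → j < k → ∃ e, D.tail e = p j ∧ D.head e = p (j + 1)) ∧
      (∃ e, D.tail e = p k ∧ D.head e = p i) := by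
  exact auxmain G D v hST hnosink (Fintype.card V) 1 (fun _ => v) le_rfl
    (by omega) rfl (by intro a b; omega) (by intro j; omega) Relation.ReflTransGen.refl
end

section
/- Let D be an orientation of a graph G and v a vertex with S_v ∩ T_v = {v}. If T_v contains no sources, then D contains an in-lasso starting at v: a directed path v_k → v_{k−1} → ⋯ → v₁ = v with k ≥ 3 together with an edge v_i → v_k for some 2 ≤ i ≤ k−1. -/
attribute [local instance] Classical.propDecidable

/-- if `S_v ∩ T_v = {v}` and `T_v` has no sources, then there is an
in-lasso starting at `v`: a directed path `p k → ⋯ → p 1 = v` (`k ≥ 3`) together with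
an edge from `p i` to `p k` for some `2 ≤ i ≤ k - 1`. -/
theorem stmt15 {V E : Type} [Fintype V] [Fintype E] (G : Multigraph V E)
    (D : G.Orientation) (v : V)
    (hST : ∀ w, D.Reach v w → D.Reach w v → w = v)
    (hnosource : ∀ w, D.Reach w v → ∃ e, D.head e = w) :
    ∃ (k : ℕ) (p : ℕ → V) (i : ℕ), 3 ≤ k ∧ 2 ≤ i ∧ i < k ∧ p 1 = v ∧
      (∀ a b, 1 ≤ a → a < b → b ≤ k → p a ≠ p b) ∧
      (∀ j, 1 ≤ j → j < k → ∃ e, D.tail e = p (j + 1) ∧ D.head e = p j) ∧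
      (∃ e, D.tail e = p i ∧ D.head e = p k) := by

  classical
  let g : V → V := fun w => if h : ∃ e, D.head e = w then D.tail h.choose else w
  have key : ∀ w, D.Reach w v →
      (∃ e, D.tail e = g w ∧ D.head e = w) ∧ D.Reach (g w) v := by
    intro w hw
    have hx : ∃ e, D.head e = w := hnosource w hw
    have hg : g w = D.tail hx.choose := dif_pos hx
    refine ⟨⟨hx.choose, hg.symm, hx.choose_spec⟩, ?_⟩
    exact Relation.ReflTransGen.head ⟨hx.choose, hg.symm, hx.choose_spec⟩ hw
  have main : ∀ n, D.Reach (g^[n] v) v := by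
    intro n
    induction n with
    | zero => exact Relation.ReflTransGen.refl
    | succ n ih =>
      rw [Function.iterate_succ_apply']
      exact (key _ ih).2
  let p : ℕ → V := fun j => g^[j - 1] v
  have hp1 : p 1 = v := rfl
  have hreach : ∀ j, D.Reach (p j) v := fun j => main (j - 1)
  have edge : ∀ j, 1 ≤ j → ∃ e, D.tail e = p (j + 1) ∧ D.head e = p j := by
    intro j hj
    have h2 : p (j + 1) = g (p j) := by
      show g^[(j + 1) - 1] v = g (g^[j - 1] v)
      rw [show (j + 1) - 1 = (j - 1) + 1 from by omega, Function.iterate_succ_apply']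
    rw [h2]
    exact (key _ (hreach j)).1
  have P : ∃ m, ∃ i, 1 ≤ i ∧ i < m ∧ p i = p m := by
    obtain ⟨x, y, hxy, hpe⟩ := Fintype.exists_ne_map_eq_of_card_lt
      (fun j : Fin (Fintype.card V + 1) => p ((j : ℕ) + 1)) (by simp)
    have hne : (x : ℕ) ≠ (y : ℕ) := fun h => hxy (Fin.ext h)
    rcases lt_or_gt_of_ne hne with h | h
    · exact ⟨(y : ℕ) + 1, (x : ℕ) + 1, by omega, by omega, hpe⟩
    · exact ⟨(x : ℕ) + 1, (y : ℕ) + 1, by omega, by omega, hpe.symm⟩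
  obtain ⟨i, hi1, him, hpim⟩ := Nat.find_spec P
  set m := Nat.find P with hm
  have hdist : ∀ a b, 1 ≤ a → a < b → b < m → p a ≠ p b := by
    intro a b ha hab hbm hpe
    exact Nat.find_min P hbm ⟨a, ha, hab, hpe⟩
  have noloop : ∀ e, D.tail e ≠ D.head e := by
    intro e h
    exact G.loopless e (by rw [D.consistent e, h]; exact Sym2.mk_isDiag_iff.mpr rfl)
  have hi_ne : i ≠ m - 1 := by
    intro h
    obtain ⟨e, he1, he2⟩ := edge (m - 1) (by omega)
    have hmm : p ((m - 1) + 1) = p m := by congr 1; omega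
    apply noloop e
    rw [he1, he2, hmm, ← hpim, h]
  have hi_ge2 : 2 ≤ i := by
    by_contra hcon
    have hi1' : i = 1 := by omega
    have hm2 : m ≠ 2 := by
      intro h2
      obtain ⟨e, he1, he2⟩ := edge 1 (by omega)
      apply noloop e
      rw [he1, he2, show (1 : ℕ) + 1 = m from by omega, ← hpim, hi1']
    obtain ⟨e, he1, he2⟩ := edge (m - 1) (by omega)
    have hpm : p ((m - 1) + 1) = v := by
      rw [show m - 1 + 1 = m from by omega, ← hpim, hi1', hp1]
    have hreachv : D.Reach v (p (m - 1)) :=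
      Relation.ReflTransGen.single ⟨e, he1.trans hpm, he2⟩
    have heq : p (m - 1) = v := hST (p (m - 1)) hreachv (hreach (m - 1))
    exact hdist 1 (m - 1) le_rfl (by omega) (by omega) (by rw [hp1, heq])
  refine ⟨m - 1, p, i, by omega, hi_ge2, by omega, hp1, ?_, ?_, ?_⟩
  · intro a b ha hab hbm
    exact hdist a b ha hab (by omega)
  · intro j hj _
    exact edge j hj
  · obtain ⟨e, he1, he2⟩ := edge (m - 1) (by omega)
    exact ⟨e, by rw [he1, show m - 1 + 1 = m from by omega, ← hpim], he2⟩
end
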